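/- arXiv:2001.02848 — 2 statements merged into one kernel-verified Lean document; each statement's English description precedes it below -/
import Mathlib

section
/- Let H be a Hopf algebra over a field k, A a left H-module algebra, and C a nonzero finite-dimensional subcoalgebra of H. Then the algebra [C^cop, A] = Hom_k(C, A) with multiplication (ξ × η)(c) = Σ ξ(c₍₂₎) η(c₍₁₎) is a free right A-module of finite rank with respect to the action ξ ·_ρ a = ξ × ρ_a, where ρ_a(c) = S(c)a. In particular ρ : A → [C^cop, A] is injective. -/
open TensorProduct

/-- `act` makes the `k`-algebra `A` into a left `H`-module algebra:
`h ⊳ (a b) = ∑ (h₍₁₎ ⊳ a)(h₍₂₎ ⊳ b)` and `h ⊳ 1 = ε(h) 1`, together with the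
left `H`-module axioms. -/
def IsModuleAlgebra (k : Type*) [Field k] {H A : Type*} [Ring H] [HopfAlgebra k H]
    [Ring A] [Algebra k A] (act : H →ₗ[k] A →ₗ[k] A) : Prop :=
  (∀ g h : H, act (g * h) = (act g) ∘ₗ (act h)) ∧
  (act 1 = LinearMap.id) ∧
  (∀ (h : H) (a b : A),
    act h (a * b) =
      LinearMap.mul' k A ((TensorProduct.map (act.flip a) (act.flip b))
        (Coalgebra.comul h))) ∧
  (∀ h : H, act h 1 = Coalgebra.counit (R := k) h • (1 : A))

variable {k : Type*} [Field k] {H A C : Type*} [Ring H] [HopfAlgebra k H]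
  [Ring A] [Algebra k A] [AddCommGroup C] [Module k C] [Coalgebra k C]

/-- The convolution product of `[C^cop, A]`: `(ξ × η)(c) = ∑ ξ(c₍₂₎) η(c₍₁₎)`. -/
noncomputable def copConv (ξ η : C →ₗ[k] A) : C →ₗ[k] A :=
  LinearMap.mul' k A ∘ₗ TensorProduct.map ξ η ∘ₗ
    (TensorProduct.comm k C C).toLinearMap ∘ₗ Coalgebra.comul

/-- The map `ρ : A → [C^cop, A]`, `ρ_a(c) = S(ι c) ⊳ a`, where `ι : C → H` realizes `C`
as a (finite-dimensional) subcoalgebra of `H`. -/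
noncomputable def copRho (act : H →ₗ[k] A →ₗ[k] A) (ι : C →ₗc[k] H) (a : A) :
    C →ₗ[k] A :=
  (act.flip a) ∘ₗ (HopfAlgebra.antipode (R := k)) ∘ₗ (ι : C →ₗ[k] H)

/-! ### Auxiliary machinery -/

/-- The twisting operator `ξ ↦ (c ↦ Σ φ(c₁) ⊳ ξ(c₂))`. -/
noncomputable def Tm (act : H →ₗ[k] A →ₗ[k] A) (φ : C →ₗ[k] H) (ξ : C →ₗ[k] A) :
    C →ₗ[k] A :=
  TensorProduct.lift act ∘ₗ TensorProduct.map φ ξ ∘ₗ Coalgebra.comul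

theorem Tm_Tm (act : H →ₗ[k] A →ₗ[k] A)
    (hmul : ∀ g h : H, act (g * h) = (act g) ∘ₗ (act h))
    (φ ψ : C →ₗ[k] H) (ξ : C →ₗ[k] A) :
    Tm act φ (Tm act ψ ξ) =
      Tm act (LinearMap.mul' k H ∘ₗ TensorProduct.map φ ψ ∘ₗ Coalgebra.comul) ξ := by
  have step1 : (TensorProduct.lift act ∘ₗ
        TensorProduct.map φ (TensorProduct.lift act ∘ₗ TensorProduct.map ψ ξ)) ∘ₗ
        (TensorProduct.assoc k C C C).toLinearMap
      = TensorProduct.lift act ∘ₗ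
        TensorProduct.map (LinearMap.mul' k H ∘ₗ TensorProduct.map φ ψ) ξ := by
    apply TensorProduct.ext_threefold
    intro x y z
    simp [hmul (φ x) (ψ y)]
  have e1 := LinearMap.congr_fun step1
  simp only [LinearMap.comp_apply, LinearEquiv.coe_coe] at e1
  have e3 := LinearMap.congr_fun
    (LinearMap.map_comp_rTensor (f := LinearMap.mul' k H ∘ₗ TensorProduct.map φ ψ)
      (g := ξ) (f' := Coalgebra.comul (R := k) (A := C)))
  simp only [LinearMap.comp_apply] at e3
  ext c
  simp only [Tm, LinearMap.comp_apply]
  rw [show (TensorProduct.lift act ∘ₗ TensorProduct.map ψ ξ ∘ₗ Coalgebra.comul : C →ₗ[k] A)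
      = (TensorProduct.lift act ∘ₗ TensorProduct.map ψ ξ) ∘ₗ Coalgebra.comul from rfl,
    ← LinearMap.map_comp_lTensor, LinearMap.comp_apply, ← Coalgebra.coassoc_apply,
    e1, e3, LinearMap.comp_assoc]

theorem conv_id_antipode (ι : C →ₗc[k] H) :
    LinearMap.mul' k H ∘ₗ
      TensorProduct.map (ι : C →ₗ[k] H)
        (HopfAlgebra.antipode (R := k) ∘ₗ (ι : C →ₗ[k] H)) ∘ₗ Coalgebra.comul
      = Algebra.linearMap k H ∘ₗ Coalgebra.counit := by
  ext c
  simp only [LinearMap.comp_apply]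
  rw [← LinearMap.lTensor_comp_map, LinearMap.comp_apply,
    ← LinearMap.comp_apply (TensorProduct.map _ _), CoalgHomClass.map_comp_comul ι,
    LinearMap.comp_apply, HopfAlgebra.mul_antipode_lTensor_comul_apply,
    show Coalgebra.counit (R := k) ((ι : C →ₗ[k] H) c) = Coalgebra.counit c from
      LinearMap.congr_fun (CoalgHomClass.counit_comp ι) c]
  rfl

theorem conv_antipode_id (ι : C →ₗc[k] H) :
    LinearMap.mul' k H ∘ₗ
      TensorProduct.map (HopfAlgebra.antipode (R := k) ∘ₗ (ι : C →ₗ[k] H))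
        (ι : C →ₗ[k] H) ∘ₗ Coalgebra.comul
      = Algebra.linearMap k H ∘ₗ Coalgebra.counit := by
  ext c
  simp only [LinearMap.comp_apply]
  rw [← LinearMap.rTensor_comp_map, LinearMap.comp_apply,
    ← LinearMap.comp_apply (TensorProduct.map _ _), CoalgHomClass.map_comp_comul ι,
    LinearMap.comp_apply, HopfAlgebra.mul_antipode_rTensor_comul_apply,
    show Coalgebra.counit (R := k) ((ι : C →ₗ[k] H) c) = Coalgebra.counit c from
      LinearMap.congr_fun (CoalgHomClass.counit_comp ι) c]
  rfl

theorem Tm_unit (act : H →ₗ[k] A →ₗ[k] A) (hone : act 1 = LinearMap.id)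
    (ξ : C →ₗ[k] A) :
    Tm act (Algebra.linearMap k H ∘ₗ Coalgebra.counit) ξ = ξ := by
  ext c
  simp only [Tm, LinearMap.comp_apply]
  rw [← LinearMap.map_comp_rTensor (f := Algebra.linearMap k H) (g := ξ)
      (f' := Coalgebra.counit), LinearMap.comp_apply, Coalgebra.rTensor_counit_comul]
  simp [hone]

/-- `B ((x ⊗ h) ⊗ z) = (ι x ⊳ ξ z) * (h ⊳ a)`. -/
noncomputable def Bmap (act : H →ₗ[k] A →ₗ[k] A) (ι : C →ₗc[k] H)
    (ξ : C →ₗ[k] A) (a : A) : (C ⊗[k] H) ⊗[k] C →ₗ[k] A :=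
  LinearMap.mul' k A ∘ₗ
    TensorProduct.map (TensorProduct.lift act ∘ₗ
      TensorProduct.map (ι : C →ₗ[k] H) ξ) (act.flip a) ∘ₗ
    (TensorProduct.assoc k C C H).symm.toLinearMap ∘ₗ
    ((TensorProduct.comm k H C).toLinearMap.lTensor C) ∘ₗ
    (TensorProduct.assoc k C H C).toLinearMap

@[simp] theorem Bmap_tmul (act : H →ₗ[k] A →ₗ[k] A) (ι : C →ₗc[k] H)
    (ξ : C →ₗ[k] A) (a : A) (x : C) (h : H) (z : C) :
    Bmap act ι ξ a ((x ⊗ₜ h) ⊗ₜ z) = act (ι x) (ξ z) * act h a := by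
  simp [Bmap, LinearMap.mul'_apply]

/-- `ν (x ⊗ y) = ι x * S (ι y)`. -/
noncomputable def nu (ι : C →ₗc[k] H) : C ⊗[k] C →ₗ[k] H :=
  LinearMap.mul' k H ∘ₗ
    TensorProduct.map (ι : C →ₗ[k] H)
      (HopfAlgebra.antipode (R := k) ∘ₗ (ι : C →ₗ[k] H))

theorem claim3 (act : H →ₗ[k] A →ₗ[k] A)
    (hmul : ∀ g h : H, act (g * h) = (act g) ∘ₗ (act h))
    (hma : ∀ (h : H) (a b : A), act h (a * b) =
      LinearMap.mul' k A ((TensorProduct.map (act.flip a) (act.flip b))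
        (Coalgebra.comul h)))
    (ι : C →ₗc[k] H) (ξ : C →ₗ[k] A) (a : A) :
    (TensorProduct.lift act ∘ₗ
      TensorProduct.map (ι : C →ₗ[k] H)
        (LinearMap.mul' k A ∘ₗ TensorProduct.map ξ (copRho act ι a) ∘ₗ
          (TensorProduct.comm k C C).toLinearMap)) ∘ₗ
      (TensorProduct.assoc k C C C).toLinearMap
    = Bmap act ι ξ a ∘ₗ
        ((nu ι).lTensor C).rTensor C ∘ₗ
        (TensorProduct.assoc k C C C).toLinearMap.rTensor C ∘ₗ
        ((Coalgebra.comul (R := k) (A := C)).rTensor C).rTensor C := by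
  apply TensorProduct.ext_threefold
  intro x y z
  simp only [LinearMap.comp_apply, LinearEquiv.coe_coe, TensorProduct.assoc_tmul,
    TensorProduct.map_tmul, TensorProduct.comm_tmul, LinearMap.rTensor_tmul,
    TensorProduct.lift.tmul, LinearMap.mul'_apply]
  rw [copRho]
  simp only [LinearMap.comp_apply, LinearMap.flip_apply]
  rw [hma ((ι : C →ₗ[k] H) x) (ξ z) (act (HopfAlgebra.antipode (R := k) ((ι : C →ₗ[k] H) y)) a)]
  rw [show Coalgebra.comul (R := k) ((ι : C →ₗ[k] H) x)
      = TensorProduct.map (ι : C →ₗ[k] H) (ι : C →ₗ[k] H) (Coalgebra.comul x) from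
    (LinearMap.congr_fun (CoalgHomClass.map_comp_comul ι) x).symm]
  induction Coalgebra.comul (R := k) x using TensorProduct.induction_on with
  | zero => simp
  | tmul u v => simp [nu, LinearMap.mul'_apply, hmul]
  | add s t hs ht => simp only [add_tmul, map_add, hs, ht]

theorem claim6 (act : H →ₗ[k] A →ₗ[k] A) (hone : act 1 = LinearMap.id)
    (ι : C →ₗc[k] H) (ξ : C →ₗ[k] A) (a : A) :
    Bmap act ι ξ a ∘ₗ
      ((Algebra.linearMap k H ∘ₗ Coalgebra.counit).lTensor C).rTensor C
    = LinearMap.mulRight k a ∘ₗ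
        (TensorProduct.lift act ∘ₗ TensorProduct.map (ι : C →ₗ[k] H) ξ) ∘ₗ
        (((TensorProduct.rid k C).toLinearMap ∘ₗ
          (Coalgebra.counit (R := k) (A := C)).lTensor C).rTensor C) := by
  apply TensorProduct.ext_threefold
  intro x y z
  simp only [LinearMap.comp_apply, LinearMap.rTensor_tmul, LinearMap.lTensor_tmul,
    LinearEquiv.coe_coe, TensorProduct.rid_tmul, Algebra.linearMap_apply, Bmap_tmul,
    LinearMap.mulRight_apply, TensorProduct.map_tmul, TensorProduct.lift.tmul]
  rw [Algebra.algebraMap_eq_smul_one (Coalgebra.counit (R := k) y), map_smul, hone]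
  simp [mul_smul_comm, smul_mul_assoc]

/-- The key computation: twisting intertwines the `ρ`-action with the pointwise action. -/
theorem Tm_copConv (act : H →ₗ[k] A →ₗ[k] A)
    (hmul : ∀ g h : H, act (g * h) = (act g) ∘ₗ (act h))
    (hone : act 1 = LinearMap.id)
    (hma : ∀ (h : H) (a b : A), act h (a * b) =
      LinearMap.mul' k A ((TensorProduct.map (act.flip a) (act.flip b))
        (Coalgebra.comul h)))
    (ι : C →ₗc[k] H) (ξ : C →ₗ[k] A) (a : A) :
    Tm act ι (copConv ξ (copRho act ι a)) = LinearMap.mulRight k a ∘ₗ Tm act ι ξ := by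
  have coa4 : (TensorProduct.assoc k C C C).toLinearMap.rTensor C ∘ₗ
        ((Coalgebra.comul (R := k) (A := C)).rTensor C).rTensor C ∘ₗ
        (Coalgebra.comul (R := k) (A := C)).rTensor C
      = ((Coalgebra.comul (R := k) (A := C)).lTensor C).rTensor C ∘ₗ
        (Coalgebra.comul (R := k) (A := C)).rTensor C := by
    rw [← LinearMap.rTensor_comp, ← LinearMap.rTensor_comp, ← LinearMap.rTensor_comp,
      Coalgebra.coassoc, LinearMap.rTensor_comp]
  have hD : ((nu ι).lTensor C).rTensor C ∘ₗ
        ((Coalgebra.comul (R := k) (A := C)).lTensor C).rTensor C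
      = ((Algebra.linearMap k H ∘ₗ Coalgebra.counit).lTensor C).rTensor C := by
    rw [← LinearMap.rTensor_comp, ← LinearMap.lTensor_comp,
      show (nu ι) ∘ₗ Coalgebra.comul = Algebra.linearMap k H ∘ₗ Coalgebra.counit by
        rw [nu, LinearMap.comp_assoc]; exact conv_id_antipode ι]
  have hF : (((TensorProduct.rid k C).toLinearMap ∘ₗ
        (Coalgebra.counit (R := k)).lTensor C).rTensor C) ∘ₗ
        (Coalgebra.comul (R := k) (A := C)).rTensor C = LinearMap.id := by
    rw [← LinearMap.rTensor_comp,
      show ((TensorProduct.rid k C).toLinearMap ∘ₗ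
          (Coalgebra.counit (R := k)).lTensor C) ∘ₗ Coalgebra.comul
        = (LinearMap.id : C →ₗ[k] C) by
          ext c
          simp [Coalgebra.lTensor_counit_comul (R := k) c],
      LinearMap.rTensor_id]
  have e3 := LinearMap.congr_fun (claim3 act hmul hma ι ξ a)
  simp only [LinearMap.comp_apply, LinearEquiv.coe_coe] at e3
  have ecoa4 := LinearMap.congr_fun coa4
  simp only [LinearMap.comp_apply] at ecoa4
  have ehD := LinearMap.congr_fun hD
  simp only [LinearMap.comp_apply] at ehD
  have e6 := LinearMap.congr_fun (claim6 act hone ι ξ a)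
  simp only [LinearMap.comp_apply] at e6
  have ehF := LinearMap.congr_fun hF
  simp only [LinearMap.comp_apply, LinearMap.id_apply] at ehF
  ext c
  simp only [Tm, LinearMap.comp_apply, LinearMap.mulRight_apply]
  rw [show copConv ξ (copRho act ι a)
      = (LinearMap.mul' k A ∘ₗ TensorProduct.map ξ (copRho act ι a) ∘ₗ
          (TensorProduct.comm k C C).toLinearMap) ∘ₗ Coalgebra.comul from rfl,
    ← LinearMap.map_comp_lTensor, LinearMap.comp_apply, ← Coalgebra.coassoc_apply,
    e3, ecoa4, ehD, e6, ehF, LinearMap.mulRight_apply]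

/-- `Tm` as a linear map in `ξ`. -/
noncomputable def TmL (act : H →ₗ[k] A →ₗ[k] A) (φ : C →ₗ[k] H) :
    (C →ₗ[k] A) →ₗ[k] (C →ₗ[k] A) where
  toFun ξ := Tm act φ ξ
  map_add' ξ η := by
    have h : TensorProduct.map φ (ξ + η) = TensorProduct.map φ ξ + TensorProduct.map φ η :=
      TensorProduct.map_add_right _ _ _
    ext c
    simp [Tm, h]
  map_smul' r ξ := by
    have h : TensorProduct.map φ (r • ξ) = r • TensorProduct.map φ ξ :=
      TensorProduct.map_smul_right _ _ _
    ext c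
    simp [Tm, h]

/-- The twisting operator attached to `ι` is a linear automorphism. -/
noncomputable def TmEquiv (act : H →ₗ[k] A →ₗ[k] A)
    (hmul : ∀ g h : H, act (g * h) = (act g) ∘ₗ (act h))
    (hone : act 1 = LinearMap.id) (ι : C →ₗc[k] H) :
    (C →ₗ[k] A) ≃ₗ[k] (C →ₗ[k] A) :=
  LinearEquiv.ofLinear (TmL act (ι : C →ₗ[k] H))
    (TmL act (HopfAlgebra.antipode (R := k) ∘ₗ (ι : C →ₗ[k] H)))
    (by
      ext ξ c
      have : Tm act (ι : C →ₗ[k] H)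
          (Tm act (HopfAlgebra.antipode (R := k) ∘ₗ (ι : C →ₗ[k] H)) ξ) = ξ := by
        rw [Tm_Tm act hmul, conv_id_antipode ι, Tm_unit act hone]
      simpa [TmL] using LinearMap.congr_fun this c)
    (by
      ext ξ c
      have : Tm act (HopfAlgebra.antipode (R := k) ∘ₗ (ι : C →ₗ[k] H))
          (Tm act (ι : C →ₗ[k] H) ξ) = ξ := by
        rw [Tm_Tm act hmul, conv_antipode_id ι, Tm_unit act hone]
      simpa [TmL] using LinearMap.congr_fun this c)

/-- For a nonzero finite-dimensional subcoalgebra `C` of `H`, the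
convolution algebra `[C^cop, A]` is a free right `A`-module of finite (positive) rank
with respect to the action `ξ ·ᵨ a = ξ × ρ_a`; in particular `ρ` is injective. -/
theorem copConv_free_right_module [FiniteDimensional k C] [Nontrivial C]
    (act : H →ₗ[k] A →ₗ[k] A) (hact : IsModuleAlgebra k act)
    (ι : C →ₗc[k] H) (hι : Function.Injective ι) :
    (∃ n : ℕ, 0 < n ∧ ∃ Φ : (C →ₗ[k] A) ≃ₗ[k] (Fin n → A),
      ∀ (ξ : C →ₗ[k] A) (a : A),
        Φ (copConv ξ (copRho act ι a)) = fun i => Φ ξ i * a) ∧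
    Function.Injective (copRho act ι) := by
  obtain ⟨hmul, hone, hma, -⟩ := hact
  set n := Module.finrank k C with hn
  have npos : 0 < n := Module.finrank_pos
  let b : Module.Basis (Fin n) k C := Module.finBasis k C
  let Φ : (C →ₗ[k] A) ≃ₗ[k] (Fin n → A) :=
    (TmEquiv act hmul hone ι).trans (b.constr k).symm
  have hrep : ∀ (f : C →ₗ[k] A) (i : Fin n), (b.constr k).symm f i = f (b i) := by
    intro f i
    conv_rhs => rw [← (b.constr k).apply_symm_apply f]
    rw [Module.Basis.constr_basis]
  have hTmEq : ∀ ξ : C →ₗ[k] A, TmEquiv act hmul hone ι ξ = Tm act (ι : C →ₗ[k] H) ξ := by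
    intro ξ; rfl
  have main : ∀ (ξ : C →ₗ[k] A) (a : A),
      Φ (copConv ξ (copRho act ι a)) = fun i => Φ ξ i * a := by
    intro ξ a
    funext i
    show (b.constr k).symm (TmEquiv act hmul hone ι (copConv ξ (copRho act ι a))) i
      = (b.constr k).symm (TmEquiv act hmul hone ι ξ) i * a
    rw [hrep, hrep, hTmEq, hTmEq, Tm_copConv act hmul hone hma ι ξ a]
    rfl
  refine ⟨⟨n, npos, Φ, main⟩, ?_⟩
  intro a₁ a₂ hab
  let ξ : C →ₗ[k] A := Φ.symm (fun _ => 1)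
  have h1 := congrFun (main ξ a₁) ⟨0, npos⟩
  have h2 := congrFun (main ξ a₂) ⟨0, npos⟩
  rw [hab] at h1
  have hξ : Φ ξ = fun _ => (1 : A) := Φ.apply_symm_apply _
  rw [h2, hξ] at h1
  simpa using h1.symm
end

section
/- Let H be a Hopf algebra over a field k with antipode S, and A a left H-module algebra. Let E'_H be the set of right ideals I of A such that for each h ∈ S(H) there exists an essential right ideal J with hJ ⊆ I. Then E'_H satisfies axiom (T3) of a Gabriel topology: if I ∈ E'_H and a ∈ A, then (I : a) = {x ∈ A : ax ∈ I} belongs to E'_H. -/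
open TensorProduct

/-- A subset of a ring `A` is a right ideal. -/
def IsRightIdeal {A : Type*} [Ring A] (I : Set A) : Prop :=
  (0 : A) ∈ I ∧ (∀ x ∈ I, ∀ y ∈ I, x + y ∈ I) ∧ (∀ x ∈ I, ∀ a : A, x * a ∈ I)

/-- An essential right ideal: a right ideal meeting every nonzero right ideal nontrivially. -/
def IsEssentialRightIdeal {A : Type*} [Ring A] (I : Set A) : Prop :=
  IsRightIdeal I ∧
    ∀ J : Set A, IsRightIdeal J → (∃ y ∈ J, y ≠ 0) → ∃ x ∈ I, x ∈ J ∧ x ≠ 0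

/-- The filter `E'_H`: right ideals `I` of `A` such that for each `h ∈ S(H)` there is an
essential right ideal `J` of `A` with `h ⊳ J ⊆ I`. -/
def MemEH (k : Type*) [Field k] {H A : Type*} [Ring H] [HopfAlgebra k H]
    [Ring A] [Algebra k A] (act : H →ₗ[k] A →ₗ[k] A) (I : Set A) : Prop :=
  IsRightIdeal I ∧
    ∀ h : H, (∃ g : H, HopfAlgebra.antipode (R := k) g = h) →
      ∃ J : Set A, IsEssentialRightIdeal J ∧ ∀ x ∈ J, act h x ∈ I

/-! ### Auxiliary convolution theory -/

open Coalgebra LinearMap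

section Conv

variable (k : Type*) [Field k] {H : Type*} [Ring H] [HopfAlgebra k H]
variable {C : Type*} [Semiring C] [Algebra k C]

/-- Convolution product on `Hom(H, C)`. -/
noncomputable def myconv (f g : H →ₗ[k] C) : H →ₗ[k] C :=
  LinearMap.mul' k C ∘ₗ TensorProduct.map f g ∘ₗ Coalgebra.comul

/-- The convolution unit `h ↦ ε(h)•1`. -/
noncomputable def unitCounit : H →ₗ[k] C :=
  (Algebra.linearMap k C) ∘ₗ Coalgebra.counit

variable {k}

lemma myconv_apply (f g : H →ₗ[k] C) (x : H) (r : Coalgebra.Repr k x (H × H)) :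
    myconv k f g x = ∑ i ∈ r.index, f (r.left i) * g (r.right i) := by
  have hx : Coalgebra.comul (R := k) x = ∑ i ∈ r.index, r.left i ⊗ₜ[k] r.right i := r.eq.symm
  rw [myconv, LinearMap.comp_apply, LinearMap.comp_apply, hx]
  simp [map_sum]

lemma myconv_assoc (f g h : H →ₗ[k] C) :
    myconv k (myconv k f g) h = myconv k f (myconv k g h) := by
  apply LinearMap.ext; intro x
  classical
  set r : Coalgebra.Repr k x (H × H) := ℛ k x with hr
  set a₁ : (i : H × H) → Coalgebra.Repr k (r.left i) (H × H) := fun i => ℛ k (r.left i) with ha₁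
  set a₂ : (i : H × H) → Coalgebra.Repr k (r.right i) (H × H) := fun i => ℛ k (r.right i) with ha₂
  have key := Coalgebra.sum_map_tmul_tmul_eq (R := k) f g h x (repr := r) (a₁ := a₁) (a₂ := a₂)
  have key2 := congrArg (LinearMap.mul' k C ∘ₗ LinearMap.lTensor C (LinearMap.mul' k C)) key
  simp only [map_sum, LinearMap.comp_apply, LinearMap.lTensor_tmul,
    LinearMap.mul'_apply] at key2
  rw [myconv_apply _ _ x r, myconv_apply _ _ x r]
  calc ∑ i ∈ r.index, myconv k f g (r.left i) * h (r.right i)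
      = ∑ i ∈ r.index, ∑ j ∈ (a₁ i).index,
          f ((a₁ i).left j) * ((g ((a₁ i).right j)) * h (r.right i)) := by
        refine Finset.sum_congr rfl fun i _ => ?_
        rw [myconv_apply _ _ _ (a₁ i), Finset.sum_mul]
        simp [mul_assoc]
    _ = ∑ i ∈ r.index, ∑ j ∈ (a₂ i).index,
          f (r.left i) * (g ((a₂ i).left j) * h ((a₂ i).right j)) := key2.symm
    _ = ∑ i ∈ r.index, f (r.left i) * myconv k g h (r.right i) := by
        refine Finset.sum_congr rfl fun i _ => ?_
        rw [myconv_apply _ _ _ (a₂ i), Finset.mul_sum]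

lemma myconv_unit_left (f : H →ₗ[k] C) : myconv k (unitCounit k) f = f := by
  apply LinearMap.ext; intro x
  rw [myconv_apply _ _ x (ℛ k x)]
  have key := Coalgebra.sum_counit_tmul_map_eq (R := k) f x (repr := ℛ k x)
  have key2 := congrArg (TensorProduct.lid k C) key
  simp only [map_sum, TensorProduct.lid_tmul, one_smul] at key2
  simpa [unitCounit, ← Algebra.smul_def] using key2

lemma myconv_unit_right (f : H →ₗ[k] C) : myconv k f (unitCounit k) = f := by
  apply LinearMap.ext; intro x
  rw [myconv_apply _ _ x (ℛ k x)]
  have key := Coalgebra.sum_map_tmul_counit_eq (R := k) f x (repr := ℛ k x)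
  have key2 := congrArg (TensorProduct.rid k C) key
  simp only [map_sum, TensorProduct.rid_tmul, one_smul] at key2
  have : ∀ (y : C) (c : k), y * algebraMap k C c = c • y := fun y c => by
    rw [← Algebra.commutes, ← Algebra.smul_def]
  simpa [unitCounit, this] using key2

lemma myconv_comp_mulRight (f g : H →ₗ[k] C) (M : C) :
    myconv k f ((LinearMap.mulRight k M) ∘ₗ g) = (LinearMap.mulRight k M) ∘ₗ myconv k f g := by
  apply LinearMap.ext; intro x
  rw [LinearMap.comp_apply, myconv_apply _ _ x (ℛ k x), myconv_apply _ _ x (ℛ k x)]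
  simp [Finset.sum_mul, mul_assoc]

lemma myconv_mulLeft_comp (f g : H →ₗ[k] C) (M : C) :
    myconv k ((LinearMap.mulLeft k M) ∘ₗ f) g = (LinearMap.mulLeft k M) ∘ₗ myconv k f g := by
  apply LinearMap.ext; intro x
  rw [LinearMap.comp_apply, myconv_apply _ _ x (ℛ k x), myconv_apply _ _ x (ℛ k x)]
  simp [Finset.mul_sum, mul_assoc]

end Conv

section ModAlg

variable {k : Type*} [Field k] {H A : Type*} [Ring H] [HopfAlgebra k H]
  [Ring A] [Algebra k A] (act : H →ₗ[k] A →ₗ[k] A)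

lemma act_algebraMap (hact : IsModuleAlgebra k act) (c : k) :
    act (algebraMap k H c) = algebraMap k (A →ₗ[k] A) c := by
  rw [Algebra.algebraMap_eq_smul_one, map_smul, hact.2.1,
    Algebra.algebraMap_eq_smul_one]
  rfl

lemma myconv_act_antipode (hact : IsModuleAlgebra k act) :
    myconv k act (act ∘ₗ HopfAlgebra.antipode (R := k)) = unitCounit k := by
  apply LinearMap.ext; intro x
  rw [myconv_apply _ _ x (ℛ k x)]
  have : ∀ i ∈ (ℛ k x).index,
      act ((ℛ k x).left i) * (act ∘ₗ HopfAlgebra.antipode (R := k)) ((ℛ k x).right i)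
        = act ((ℛ k x).left i * HopfAlgebra.antipode (R := k) ((ℛ k x).right i)) := by
    intro i _
    rw [hact.1]
    rfl
  rw [Finset.sum_congr rfl this, ← map_sum, HopfAlgebra.sum_mul_antipode_eq_algebraMap_counit,
    act_algebraMap act hact]
  rfl

lemma myconv_antipode_act (hact : IsModuleAlgebra k act) :
    myconv k (act ∘ₗ HopfAlgebra.antipode (R := k)) act = unitCounit k := by
  apply LinearMap.ext; intro x
  rw [myconv_apply _ _ x (ℛ k x)]
  have : ∀ i ∈ (ℛ k x).index,
      (act ∘ₗ HopfAlgebra.antipode (R := k)) ((ℛ k x).left i) * act ((ℛ k x).right i)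
        = act (HopfAlgebra.antipode (R := k) ((ℛ k x).left i) * (ℛ k x).right i) := by
    intro i _
    rw [hact.1]
    rfl
  rw [Finset.sum_congr rfl this, ← map_sum, HopfAlgebra.sum_antipode_mul_eq_algebraMap_counit,
    act_algebraMap act hact]
  rfl

lemma mulRight_act_eq (hact : IsModuleAlgebra k act) (a : A) :
    (LinearMap.mulRight k (LinearMap.mulLeft k a)) ∘ₗ act
      = myconv k ((LinearMap.mul k A) ∘ₗ (act.flip a)) act := by
  apply LinearMap.ext; intro h
  apply LinearMap.ext; intro b
  have h3 := hact.2.2.1 h a b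
  rw [← (ℛ k h).eq] at h3
  simp only [map_sum, TensorProduct.map_tmul, LinearMap.mul'_apply,
    LinearMap.flip_apply] at h3
  rw [myconv_apply _ _ h (ℛ k h)]
  simp only [LinearMap.comp_apply, LinearMap.mulRight_apply, Module.End.mul_apply,
    LinearMap.mulLeft_apply, LinearMap.coe_sum, Finset.sum_apply,
    LinearMap.mul_apply', LinearMap.flip_apply]
  rw [h3]

lemma conv_u_n (hact : IsModuleAlgebra k act) (a : A) :
    myconv k (act ∘ₗ HopfAlgebra.antipode (R := k))
        ((LinearMap.mul k A) ∘ₗ (act.flip a))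
      = (LinearMap.mulLeft k (LinearMap.mulLeft k a)) ∘ₗ
          (act ∘ₗ HopfAlgebra.antipode (R := k)) := by
  set u : H →ₗ[k] (A →ₗ[k] A) := act ∘ₗ HopfAlgebra.antipode (R := k) with hu
  set n : H →ₗ[k] (A →ₗ[k] A) := (LinearMap.mul k A) ∘ₗ (act.flip a) with hn
  set M : A →ₗ[k] A := LinearMap.mulLeft k a with hM
  have h2 : n = myconv k ((LinearMap.mulRight k M) ∘ₗ act) u := by
    rw [mulRight_act_eq act hact a, myconv_assoc, myconv_act_antipode act hact,
      myconv_unit_right]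
  have hcomm : (LinearMap.mulRight k M) ∘ₗ (unitCounit k : H →ₗ[k] (A →ₗ[k] A))
      = (LinearMap.mulLeft k M) ∘ₗ unitCounit k := by
    apply LinearMap.ext; intro x
    simp only [LinearMap.comp_apply, unitCounit, Algebra.linearMap_apply,
      LinearMap.mulRight_apply, LinearMap.mulLeft_apply]
    exact Algebra.commutes (A := A →ₗ[k] A) (Coalgebra.counit (R := k) x) M
  calc myconv k u n = myconv k u (myconv k ((LinearMap.mulRight k M) ∘ₗ act) u) := by
        rw [← h2]
    _ = myconv k (myconv k u ((LinearMap.mulRight k M) ∘ₗ act)) u := (myconv_assoc _ _ _).symm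
    _ = myconv k ((LinearMap.mulRight k M) ∘ₗ myconv k u act) u := by
        rw [myconv_comp_mulRight]
    _ = myconv k ((LinearMap.mulRight k M) ∘ₗ unitCounit k) u := by
        rw [myconv_antipode_act act hact]
    _ = myconv k ((LinearMap.mulLeft k M) ∘ₗ unitCounit k) u := by rw [hcomm]
    _ = (LinearMap.mulLeft k M) ∘ₗ myconv k (unitCounit k) u := myconv_mulLeft_comp _ _ _
    _ = (LinearMap.mulLeft k M) ∘ₗ u := by rw [myconv_unit_left]

/-- The key identity `a * (S g ⊳ b) = ∑ (S g₁) ⊳ ((g₂ ⊳ a) * b)`. -/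
lemma key_identity (hact : IsModuleAlgebra k act) (a b : A) (g : H)
    (r : Coalgebra.Repr k g (H × H)) :
    a * act (HopfAlgebra.antipode (R := k) g) b
      = ∑ i ∈ r.index,
          act (HopfAlgebra.antipode (R := k) (r.left i)) ((act (r.right i) a) * b) := by
  have h := LinearMap.congr_fun (conv_u_n act hact a) g
  rw [myconv_apply _ _ g r] at h
  have h' := LinearMap.congr_fun h b
  simp only [LinearMap.coe_sum, Finset.sum_apply, Module.End.mul_apply,
    LinearMap.comp_apply, LinearMap.mulLeft_apply, LinearMap.mul_apply',
    LinearMap.flip_apply] at h'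
  exact h'.symm

end ModAlg

/-! ### Right ideal lemmas -/

section Ideals

variable {A : Type*} [Ring A]

lemma isEssential_univ : IsEssentialRightIdeal (Set.univ : Set A) :=
  ⟨⟨trivial, fun _ _ _ _ => trivial, fun _ _ _ => trivial⟩,
    fun _ _ ⟨y, hy, h0⟩ => ⟨y, trivial, hy, h0⟩⟩

lemma isRightIdeal_inter {I J : Set A} (hI : IsRightIdeal I) (hJ : IsRightIdeal J) :
    IsRightIdeal (I ∩ J) :=
  ⟨⟨hI.1, hJ.1⟩,
    fun x hx y hy => ⟨hI.2.1 x hx.1 y hy.1, hJ.2.1 x hx.2 y hy.2⟩,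
    fun x hx a => ⟨hI.2.2 x hx.1 a, hJ.2.2 x hx.2 a⟩⟩

lemma isEssential_inter {I J : Set A} (hI : IsEssentialRightIdeal I)
    (hJ : IsEssentialRightIdeal J) : IsEssentialRightIdeal (I ∩ J) := by
  refine ⟨isRightIdeal_inter hI.1 hJ.1, fun K hK hK0 => ?_⟩
  obtain ⟨x, hxI, hxK, hx0⟩ := hI.2 K hK hK0
  obtain ⟨y, hyJ, hy, hy0⟩ := hJ.2 (I ∩ K) (isRightIdeal_inter hI.1 hK) ⟨x, ⟨hxI, hxK⟩, hx0⟩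
  exact ⟨y, ⟨hy.1, hyJ⟩, hy.2, hy0⟩

lemma isEssential_biInter {ι : Type*} (s : Finset ι) (J : ι → Set A)
    (h : ∀ i, IsEssentialRightIdeal (J i)) :
    IsEssentialRightIdeal (⋂ i ∈ s, J i) := by
  classical
  induction s using Finset.induction_on with
  | empty => simpa using isEssential_univ
  | insert _ _ hm ih =>
      rw [Finset.set_biInter_insert]
      exact isEssential_inter (h _) ih

lemma isEssential_colon {J : Set A} (hJ : IsEssentialRightIdeal J) (c : A) :
    IsEssentialRightIdeal {x : A | c * x ∈ J} := by
  obtain ⟨⟨h0, hadd, hmul⟩, hess⟩ := hJ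
  refine ⟨⟨?_, ?_, ?_⟩, ?_⟩
  · show c * 0 ∈ J; rw [mul_zero]; exact h0
  · intro x hx y hy; show c * (x + y) ∈ J
    rw [mul_add]; exact hadd _ hx _ hy
  · intro x hx a; show c * (x * a) ∈ J
    rw [← mul_assoc]; exact hmul _ hx a
  · intro K hK ⟨y, hyK, hy0⟩
    by_cases hcz : ∀ z ∈ K, c * z = 0
    · refine ⟨y, ?_, hyK, hy0⟩
      show c * y ∈ J
      rw [hcz y hyK]; exact h0
    · push_neg at hcz
      obtain ⟨z₀, hz₀K, hz₀⟩ := hcz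
      have hL : IsRightIdeal ((fun z => c * z) '' K) := by
        refine ⟨⟨0, hK.1, mul_zero c⟩, ?_, ?_⟩
        · rintro _ ⟨z₁, hz₁, rfl⟩ _ ⟨z₂, hz₂, rfl⟩
          exact ⟨z₁ + z₂, hK.2.1 _ hz₁ _ hz₂, by simp [mul_add]⟩
        · rintro _ ⟨z, hz, rfl⟩ a
          exact ⟨z * a, hK.2.2 _ hz a, by simp [mul_assoc]⟩
      obtain ⟨w, hwJ, hwL, hw0⟩ := hess _ hL ⟨c * z₀, ⟨z₀, hz₀K, rfl⟩, hz₀⟩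
      obtain ⟨z, hzK, rfl⟩ := hwL
      exact ⟨z, hwJ, hzK, fun hz => hw0 (by simp [hz])⟩

lemma sum_mem_rightIdeal {I : Set A} (hI : IsRightIdeal I) {ι : Type*} (s : Finset ι)
    (f : ι → A) (h : ∀ i ∈ s, f i ∈ I) : (∑ i ∈ s, f i) ∈ I :=
  Finset.sum_induction f (· ∈ I) (fun a b ha hb => hI.2.1 a ha b hb) hI.1 h

end Ideals

/-- `E'_H` satisfies axiom (T3) of a Gabriel topology:
if `I ∈ E'_H` and `a ∈ A` then `(I : a) = {x | a x ∈ I}` belongs to `E'_H`. -/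
theorem memEH_colon (k : Type*) [Field k] {H A : Type*} [Ring H]
    [HopfAlgebra k H] [Ring A] [Algebra k A] (act : H →ₗ[k] A →ₗ[k] A)
    (hact : IsModuleAlgebra k act) :
    ∀ I : Set A, MemEH k act I → ∀ a : A, MemEH k act {x : A | a * x ∈ I} := by
  intro I hI a
  obtain ⟨hIid, hIS⟩ := hI
  constructor
  · refine ⟨?_, ?_, ?_⟩
    · show a * 0 ∈ I; rw [mul_zero]; exact hIid.1
    · intro x hx y hy; show a * (x + y) ∈ I
      rw [mul_add]; exact hIid.2.1 _ hx _ hy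
    · intro x hx c; show a * (x * c) ∈ I
      rw [← mul_assoc]; exact hIid.2.2 _ hx c
  · rintro h ⟨g, rfl⟩
    set r : Coalgebra.Repr k g (H × H) := ℛ k g with hr
    choose J hJess hJI using
      fun (i : H × H) => hIS (HopfAlgebra.antipode (R := k) (r.left i)) ⟨r.left i, rfl⟩
    refine ⟨⋂ i ∈ r.index, {x : A | (act (r.right i) a) * x ∈ J i}, ?_, ?_⟩
    · exact isEssential_biInter _ _ fun i => isEssential_colon (hJess i) _
    · intro b hb
      show a * act (HopfAlgebra.antipode (R := k) g) b ∈ I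
      rw [key_identity act hact a b g r]
      refine sum_mem_rightIdeal hIid _ _ fun i hi => ?_
      exact hJI i _ (Set.mem_iInter₂.1 hb i hi)
end
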